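/- arXiv:2004.11811 — 2 statements merged into one kernel-verified Lean document; each statement's English description precedes it below -/
import Mathlib

section
/- For every integer n ≥ 1 and all λ, μ ∈ k with λ ≠ 0, μ ≠ 0 and λ ≠ μ, the k-vector space of Λ_e-module homomorphisms from the band module B(n,λ) to the band module B(n,μ) has dimension n². -/
/-! Common framework: representations of the quiver Q_e / modules over the
generalized Brauer star algebra Λ_e, encoded as a module `V` together with
endomorphisms `v i` (images of the vertex idempotents), `a i` (images of the
arrows; `a i` is the arrow leaving vertex `i`, with `a ⟨e-1⟩` the arrow
`α_e : e → 1`) and `d` (image of the loop `δ`). -/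

namespace GBTA

structure PreRep (R : Type) [CommRing R] (e : ℕ) : Type 1 where
  V : Type
  [instAdd : AddCommGroup V]
  [instMod : Module R V]
  v : Fin e → Module.End R V
  a : Fin e → Module.End R V
  d : Module.End R V

attribute [instance] PreRep.instAdd PreRep.instMod

variable {R : Type} [CommRing R] {e : ℕ}

/-- The (0-based) index of the vertex `e`. -/
def ve (e : ℕ) [NeZero e] : Fin e :=
  ⟨e - 1, by have := Nat.pos_of_ne_zero (NeZero.ne e); omega⟩

/-- The (0-based) index of the vertex `e - 1`. -/
def vem (e : ℕ) [NeZero e] : Fin e :=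
  ⟨e - 2, by have := Nat.pos_of_ne_zero (NeZero.ne e); omega⟩

open Fin.NatCast in
/-- The cycle `C_i`: the composite of the `e` cyclically consecutive arrows
starting with the arrow leaving vertex `i` (composites written right to left). -/
def cyc [NeZero e] (ρ : PreRep R e) (i : Fin e) : Module.End R ρ.V :=
  (((List.range e).reverse).map fun l => ρ.a (i + (l : Fin e))).prod

/-- The defining relations of the generalized Brauer star algebra `Λ_e`. -/
def Satisfies [NeZero e] (ρ : PreRep R e) : Prop :=
  (∀ i j : Fin e, i ≠ j → ρ.v i * ρ.v j = 0) ∧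
  (∀ i : Fin e, ρ.v i * ρ.v i = ρ.v i) ∧
  ((∑ i : Fin e, ρ.v i) = 1) ∧
  (∀ i : Fin e, ρ.a i = ρ.v (i + 1) * ρ.a i * ρ.v i) ∧
  (ρ.d = ρ.v (ve e) * ρ.d * ρ.v (ve e)) ∧
  (ρ.d * ρ.a (vem e) = 0) ∧
  (ρ.a (ve e) * ρ.d = 0) ∧
  (ρ.d * ρ.d = cyc ρ (ve e) * cyc ρ (ve e)) ∧
  (∀ i : Fin e, i ≠ ve e → ρ.a i * (cyc ρ i * cyc ρ i) = 0)

/-- The space of `Λ_e`-module homomorphisms `ρ → σ`: linear maps commuting with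
all the structure maps. -/
def homSet (ρ σ : PreRep R e) : Submodule R (ρ.V →ₗ[R] σ.V) where
  carrier := {f | (∀ i, f ∘ₗ ρ.v i = σ.v i ∘ₗ f) ∧ (∀ i, f ∘ₗ ρ.a i = σ.a i ∘ₗ f) ∧
    f ∘ₗ ρ.d = σ.d ∘ₗ f}
  add_mem' := by
    rintro f g ⟨hfv, hfa, hfd⟩ ⟨hgv, hga, hgd⟩
    exact ⟨fun i => by simp only [LinearMap.add_comp, LinearMap.comp_add, hfv i, hgv i],
      fun i => by simp only [LinearMap.add_comp, LinearMap.comp_add, hfa i, hga i],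
      by simp only [LinearMap.add_comp, LinearMap.comp_add, hfd, hgd]⟩
  zero_mem' := ⟨fun i => by simp, fun i => by simp, by simp⟩
  smul_mem' := by
    rintro c f ⟨hfv, hfa, hfd⟩
    exact ⟨fun i => by simp only [LinearMap.smul_comp, LinearMap.comp_smul, hfv i],
      fun i => by simp only [LinearMap.smul_comp, LinearMap.comp_smul, hfa i],
      by simp only [LinearMap.smul_comp, LinearMap.comp_smul, hfd]⟩

/-- Projectivity of a `Λ_e`-module, via the lifting property in the category of
`Λ_e`-modules. -/
def IsProjective [NeZero e] (P : PreRep R e) : Prop :=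
  Satisfies P ∧
  ∀ (A B : PreRep R e), Satisfies A → Satisfies B →
    ∀ p ∈ homSet A B, Function.Surjective p →
      ∀ g ∈ homSet P B, ∃ h ∈ homSet P A, p ∘ₗ h = g

/-- An endomorphism `f` of `ρ` factors through a projective `Λ_e`-module. -/
def FactorsThroughProjective [NeZero e] (ρ : PreRep R e) (f : ρ.V →ₗ[R] ρ.V) : Prop :=
  ∃ P : PreRep R e, IsProjective P ∧ ∃ g ∈ homSet ρ P, ∃ h ∈ homSet P ρ, f = h ∘ₗ g

/-- "The stable endomorphism ring of `ρ` is isomorphic to the scalars": the identity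
does not factor through a projective, and modulo endomorphisms factoring through
projectives every endomorphism is a scalar multiple of the identity. -/
def StableEndIsoScalars [NeZero e] (ρ : PreRep R e) : Prop :=
  (¬ FactorsThroughProjective ρ LinearMap.id) ∧
  ∀ f ∈ homSet ρ ρ, ∃ c : R, FactorsThroughProjective ρ (f - c • LinearMap.id)

/-- The linear map on `Fin m → W` sending the `src` coordinate to the `dst`
coordinate through `g`, and killing all other coordinates. -/
def mk1 {m : ℕ} {W : Type} [AddCommGroup W] [Module R W] (src dst : Fin m)
    (g : W →ₗ[R] W) : (Fin m → W) →ₗ[R] (Fin m → W) where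
  toFun x := fun r => if r = dst then g (x src) else 0
  map_add' x y := by funext r; by_cases h : r = dst <;> simp [h]
  map_smul' c x := by funext r; by_cases h : r = dst <;> simp [h]

/-- Projection onto the coordinates satisfying `S`. -/
def prj {m : ℕ} {W : Type} [AddCommGroup W] [Module R W] (S : Fin m → Prop)
    [DecidablePred S] : (Fin m → W) →ₗ[R] (Fin m → W) where
  toFun x := fun r => if S r then x r else 0
  map_add' x y := by funext r; by_cases h : S r <;> simp [h]
  map_smul' c x := by funext r; by_cases h : S r <;> simp [h]

/-- Last row index (`e`, 0-based) among `e+1` rows. -/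
def lastRow (e : ℕ) : Fin (e + 1) := ⟨e, Nat.lt_succ_self e⟩

/-- Second-to-last row index (`e-1`, 0-based) among `e+1` rows. -/
def sndRow (e : ℕ) : Fin (e + 1) := ⟨e - 1, by omega⟩

/-- The vertex carrying each of the `e+1` rows: row `r < e-1` sits at vertex `r`,
rows `e-1` and `e` sit at the vertex `e` (0-based index `e-1`). -/
def vrt (e : ℕ) [NeZero e] : Fin (e + 1) → Fin e := fun r =>
  if h : r.val < e - 1 then ⟨r.val, by omega⟩ else ve e


/-- The `n × n` Jordan block with eigenvalue `lam`. -/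
def jordan (R : Type) [CommRing R] (n : ℕ) (lam : R) : Matrix (Fin n) (Fin n) R :=
  Matrix.of fun i j => if i = j then lam else if (j : ℕ) = (i : ℕ) + 1 then 1 else 0

/-- The band module `B(n, lam)`. Rows `0, …, e-2` are the components `k^n` at the
vertices `1, …, e-1`; rows `e-1` and `e` are the two copies of `k^n` at vertex `e`. -/
@[reducible] def band (R : Type) [CommRing R] (e : ℕ) [NeZero e] (n : ℕ) (lam : R) : PreRep R e where
  V := Fin (e + 1) → Fin n → R
  v i := prj fun r => vrt e r = i
  a j :=
    if j.val = e - 1 then mk1 (sndRow e) ⟨0, by omega⟩ LinearMap.id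
    else if j.val = e - 2 then mk1 ⟨e - 2, by omega⟩ (lastRow e) LinearMap.id
    else mk1 ⟨j.val, Nat.lt_succ_of_lt j.isLt⟩ ⟨j.val + 1, Nat.succ_lt_succ j.isLt⟩ LinearMap.id
  d := mk1 (sndRow e) (lastRow e) (Matrix.mulVecLin (jordan R n lam))

/-- The band module `B(1, s)` (with `δ` acting through the scalar `s`); the standard
basis vector `c_i` (`1 ≤ i ≤ e-1`) is the `i-1`-st coordinate, `c_e` the `e-1`-st and
`c_{e+1}` the `e`-th. -/
@[reducible] def band1 (R : Type) [CommRing R] (e : ℕ) [NeZero e] (s : R) : PreRep R e where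
  V := Fin (e + 1) → R
  v i := prj fun r => vrt e r = i
  a j :=
    if j.val = e - 1 then mk1 (sndRow e) ⟨0, by omega⟩ LinearMap.id
    else if j.val = e - 2 then mk1 ⟨e - 2, by omega⟩ (lastRow e) LinearMap.id
    else mk1 ⟨j.val, Nat.lt_succ_of_lt j.isLt⟩ ⟨j.val + 1, Nat.succ_lt_succ j.isLt⟩ LinearMap.id
  d := mk1 (sndRow e) (lastRow e) (s • LinearMap.id)

/-- The projective module `P_e`, with basis `b_{i,1}, b_{i,2}` (row `i-1`) for
`1 ≤ i ≤ e-1` and `b_{e,1}, b_{e,2}` (row `e-1`), `b_{e,3}, b_{e,4}` (row `e`). -/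
@[reducible] def Pe (R : Type) [CommRing R] (e : ℕ) [NeZero e] : PreRep R e where
  V := Fin (e + 1) → Fin 2 → R
  v i := prj fun r => vrt e r = i
  a j :=
    if j.val = e - 1 then mk1 (sndRow e) ⟨0, by omega⟩ LinearMap.id
    else if j.val = e - 2 then
      mk1 ⟨e - 2, by omega⟩ (sndRow e) (Matrix.mulVecLin !![0, 0; 1, 0])
        + mk1 ⟨e - 2, by omega⟩ (lastRow e) (Matrix.mulVecLin !![0, 0; 0, 1])
    else mk1 ⟨j.val, Nat.lt_succ_of_lt j.isLt⟩ ⟨j.val + 1, Nat.succ_lt_succ j.isLt⟩ LinearMap.id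
  d := mk1 (sndRow e) (lastRow e) (Matrix.mulVecLin !![1, 0; 0, 0])
    + mk1 (lastRow e) (lastRow e) (Matrix.mulVecLin !![0, 0; 1, 0])

/-- `Mdef R e τ`: the representation with basis `m_1, …, m_{e+1}` (rows `0, …, e`),
`α_j(m_j) = m_{j+1}` for `j ≤ e-2`, `α_{e-1}(m_{e-1}) = τ · m_{e+1}`,
`α_e(m_e) = m_1`, `δ(m_e) = m_{e+1}`.  For `τ = 0` this is the string module `W`. -/
@[reducible] def Mdef (R : Type) [CommRing R] (e : ℕ) [NeZero e] (t : R) : PreRep R e where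
  V := Fin (e + 1) → R
  v i := prj fun r => vrt e r = i
  a j :=
    if j.val = e - 1 then mk1 (sndRow e) ⟨0, by omega⟩ LinearMap.id
    else if j.val = e - 2 then mk1 ⟨e - 2, by omega⟩ (lastRow e) (t • LinearMap.id)
    else mk1 ⟨j.val, Nat.lt_succ_of_lt j.isLt⟩ ⟨j.val + 1, Nat.succ_lt_succ j.isLt⟩ LinearMap.id
  d := mk1 (sndRow e) (lastRow e) LinearMap.id

/-- The uniserial module `U_{[i,j]}` (with `1 ≤ i ≤ j ≤ e`, 1-based). -/
@[reducible] def U (R : Type) [CommRing R] (e i j : ℕ) : PreRep R e where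
  V := Fin (j + 1 - i) → R
  v t := prj fun r => i - 1 + r.val = t.val
  a t :=
    if h : i ≤ t.val + 1 ∧ t.val + 1 ≤ j - 1 then
      mk1 ⟨t.val + 1 - i, by omega⟩ ⟨t.val + 2 - i, by omega⟩ LinearMap.id
    else 0
  d := 0

/-- The uniserial projective module `P_i` (`i0` is the 0-based index of the vertex),
with basis `p_0, …, p_{2e}` following the cycle of arrows twice around. -/
@[reducible] def Puni (R : Type) [CommRing R] (e : ℕ) [NeZero e] (i0 : ℕ) : PreRep R e where
  V := Fin (2 * e + 1) → R
  v t := prj fun r => (i0 + r.val) % e = t.val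
  a t := ∑ l : Fin (2 * e),
    if (i0 + l.val) % e = t.val then mk1 l.castSucc l.succ LinearMap.id else 0
  d := 0

/-- The simple module `S_e` at the vertex `e`. -/
@[reducible] def Se (R : Type) [CommRing R] (e : ℕ) [NeZero e] : PreRep R e where
  V := R
  v i := if i = ve e then 1 else 0
  a _ := 0
  d := 0

/-- Block upper triangular endomorphism `(x, y) ↦ (f x + θ y, f y)` of `V × V`. -/
def blk {V : Type} [AddCommGroup V] [Module R V] (f th : Module.End R V) :
    Module.End R (V × V) where
  toFun p := (f p.1 + th p.2, f p.2)
  map_add' p q := by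
    simp only [Prod.fst_add, Prod.snd_add, map_add, Prod.mk_add_mk, Prod.mk.injEq, and_true]
    abel
  map_smul' c p := by
    simp only [Prod.smul_fst, Prod.smul_snd, map_smul, Prod.smul_mk, Prod.mk.injEq,
      smul_add, RingHom.id_apply, and_self]

section Ext
variable [NeZero e]

/-- The data of a self-extension of `ρ`: for each generator of `Λ_e`, the
off-diagonal block of its action on `ρ.V × ρ.V`. -/
abbrev Cochain (ρ : PreRep R e) : Type :=
  (Fin e → Module.End R ρ.V) × (Fin e → Module.End R ρ.V) × Module.End R ρ.V

/-- The self-extension of `ρ` determined by the cochain `θ`. -/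
@[reducible] def extRep (ρ : PreRep R e) (th : Cochain ρ) : PreRep R e where
  V := ρ.V × ρ.V
  v i := blk (ρ.v i) (th.1 i)
  a i := blk (ρ.a i) (th.2.1 i)
  d := blk ρ.d th.2.2

/-- `θ` is a cocycle precisely when the corresponding extension is a `Λ_e`-module. -/
def IsCocycle (ρ : PreRep R e) (th : Cochain ρ) : Prop := Satisfies (extRep ρ th)

/-- The coboundary of `φ`; extensions differing by a coboundary are equivalent. -/
def bnd (ρ : PreRep R e) (phi : Module.End R ρ.V) : Cochain ρ :=
  (fun i => ρ.v i * phi - phi * ρ.v i, fun i => ρ.a i * phi - phi * ρ.a i,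
    ρ.d * phi - phi * ρ.d)

/-- `Ext¹_{Λ_e}(ρ, ρ)`, i.e. the space of self-extensions of `ρ` modulo equivalence
(equivalently cocycles modulo coboundaries), is one-dimensional. -/
def ExtSelfOneDimensional (ρ : PreRep R e) : Prop :=
  ∃ th0 : Cochain ρ, IsCocycle ρ th0 ∧ (∀ phi, th0 ≠ bnd ρ phi) ∧
    ∀ th : Cochain ρ, IsCocycle ρ th → ∃ (c : R) (phi : Module.End R ρ.V),
      th = c • th0 + bnd ρ phi

end Ext


/-- The endomorphism algebra of a representation. -/
def endAlg (ρ : PreRep R e) : Subalgebra R (Module.End R ρ.V) where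
  carrier := {f | (∀ i, f * ρ.v i = ρ.v i * f) ∧ (∀ i, f * ρ.a i = ρ.a i * f) ∧
    f * ρ.d = ρ.d * f}
  mul_mem' := by
    rintro f g ⟨hfv, hfa, hfd⟩ ⟨hgv, hga, hgd⟩
    refine ⟨fun i => ?_, fun i => ?_, ?_⟩
    · rw [mul_assoc, hgv i, ← mul_assoc, hfv i, mul_assoc]
    · rw [mul_assoc, hga i, ← mul_assoc, hfa i, mul_assoc]
    · rw [mul_assoc, hgd, ← mul_assoc, hfd, mul_assoc]
  one_mem' := ⟨fun i => by rw [one_mul, mul_one], fun i => by rw [one_mul, mul_one],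
    by rw [one_mul, mul_one]⟩
  add_mem' := by
    rintro f g ⟨hfv, hfa, hfd⟩ ⟨hgv, hga, hgd⟩
    exact ⟨fun i => by rw [add_mul, mul_add, hfv i, hgv i],
      fun i => by rw [add_mul, mul_add, hfa i, hga i],
      by rw [add_mul, mul_add, hfd, hgd]⟩
  zero_mem' := ⟨fun i => by rw [zero_mul, mul_zero], fun i => by rw [zero_mul, mul_zero],
    by rw [zero_mul, mul_zero]⟩
  algebraMap_mem' c :=
    ⟨fun i => Algebra.commutes c (ρ.v i), fun i => Algebra.commutes c (ρ.a i),
      Algebra.commutes c ρ.d⟩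

/-- The endomorphism `τ` of `B(1,λ)` (and of `W`): `c_e ↦ c_{e+1}`, all other
standard basis vectors to `0`. -/
def tau (R : Type) [CommRing R] (e : ℕ) : (Fin (e + 1) → R) →ₗ[R] (Fin (e + 1) → R) :=
  mk1 (sndRow e) (lastRow e) LinearMap.id

/-- The map `r₁ : B(1,λ) → P_e` (with parameter `μ` the coefficient on `b_{e,3}`):
`c_i ↦ b_{i,2}` for `1 ≤ i ≤ e-1`, `c_e ↦ b_{e,2} + μ b_{e,3}`, `c_{e+1} ↦ b_{e,4}`. -/
def r1 (R : Type) [CommRing R] (e : ℕ) (mu : R) :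
    (Fin (e + 1) → R) →ₗ[R] (Fin (e + 1) → Fin 2 → R) where
  toFun x := fun r c => if c = 1 then x r else if r = lastRow e then mu * x (sndRow e) else 0
  map_add' x y := by
    funext r c
    by_cases h : c = 1
    · simp [h]
    · by_cases h2 : r = lastRow e <;> simp [h, h2, mul_add]
  map_smul' t x := by
    funext r c
    by_cases h : c = 1
    · simp [h]
    · by_cases h2 : r = lastRow e <;> simp [h, h2] <;> ring

/-- The map `r₂ : B(1,λ) → P_e`: `c_e ↦ b_{e,4}`, all other basis vectors to `0`. -/
def r2 (R : Type) [CommRing R] (e : ℕ) :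
    (Fin (e + 1) → R) →ₗ[R] (Fin (e + 1) → Fin 2 → R) where
  toFun x := fun r c => if r = lastRow e ∧ c = 1 then x (sndRow e) else 0
  map_add' x y := by
    funext r c
    by_cases h : r = lastRow e ∧ c = 1 <;> simp [h]
  map_smul' t x := by
    funext r c
    by_cases h : r = lastRow e ∧ c = 1 <;> simp [h]

/-- The map `s₁ : P_e → B(1,λ)`: `b_{e,1} ↦ c_e`, `b_{e,2} ↦ c_{e+1}`,
`b_{e,3} ↦ λ c_{e+1}`, `b_{i,1} ↦ c_i`; zero on `b_{e,4}` and the `b_{i,2}`. -/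
def s1 (R : Type) [CommRing R] (e : ℕ) (lam : R) :
    (Fin (e + 1) → Fin 2 → R) →ₗ[R] (Fin (e + 1) → R) where
  toFun y := fun r =>
    if r = lastRow e then y (sndRow e) 1 + lam * y (lastRow e) 0 else y r 0
  map_add' x y := by
    funext r
    by_cases h : r = lastRow e <;> simp [h, mul_add] <;> ring
  map_smul' t x := by
    funext r
    by_cases h : r = lastRow e <;> simp [h] <;> ring

/-- The map `s₂ : P_e → B(1,λ)`: `b_{e,1} ↦ c_{e+1}`, all other basis vectors to `0`. -/
def s2 (R : Type) [CommRing R] (e : ℕ) :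
    (Fin (e + 1) → Fin 2 → R) →ₗ[R] (Fin (e + 1) → R) where
  toFun y := fun r => if r = lastRow e then y (sndRow e) 0 else 0
  map_add' x y := by funext r; by_cases h : r = lastRow e <;> simp [h]
  map_smul' t x := by funext r; by_cases h : r = lastRow e <;> simp [h]

/-- The map `g : W → P_e`, `w_e ↦ b_{e,3}`, `w_{e+1} ↦ b_{e,4}`, `w_j ↦ 0`. -/
def gW (R : Type) [CommRing R] (e : ℕ) :
    (Fin (e + 1) → R) →ₗ[R] (Fin (e + 1) → Fin 2 → R) where
  toFun x := fun r c =>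
    if r = lastRow e then (if c = 0 then x (sndRow e) else x (lastRow e)) else 0
  map_add' x y := by
    funext r c
    by_cases h : r = lastRow e <;> by_cases h2 : c = 0 <;> simp [h, h2]
  map_smul' t x := by
    funext r c
    by_cases h : r = lastRow e <;> by_cases h2 : c = 0 <;> simp [h, h2]

/-- The map `h : P_e → W`, `b_{e,1} ↦ w_e`, `b_{j,1} ↦ w_j`, `b_{e,3} ↦ w_{e+1}`,
zero on `b_{e,2}`, `b_{e,4}` and the `b_{j,2}`. -/
def hW (R : Type) [CommRing R] (e : ℕ) :
    (Fin (e + 1) → Fin 2 → R) →ₗ[R] (Fin (e + 1) → R) where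
  toFun y := fun r => y r 0
  map_add' x y := rfl
  map_smul' t x := rfl

end GBTA

/-! A homomorphism `f : B(n,λ) → B(n,μ)` preserves the vertex decomposition, and each arrow
`s → t` acting as the identity of `kⁿ` forces `f` to map the summand at `t` into itself by the
diagonal block of `f` at `s`. Following the arrows from the first copy of `kⁿ` at vertex `e`
around the cycle to the second copy, all these diagonal blocks equal one `X`, and `δ` gives
`X J_n(λ) = J_n(μ) X`. As `J_n(λ) - λ` and `J_n(μ) - μ` are nilpotent and `λ ≠ μ`, we get
`X = 0`. Hence `f` sends the first copy at vertex `e` to the second through an arbitrary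
`Y ∈ End(kⁿ)` and kills everything else, and every such map is a homomorphism. -/

-- `M ↦ M X - Y M` is `a - b` plus a nilpotent operator, hence invertible.
theorem eq_zero_of_mul_eq_mul_of_isNilpotent_sub {R A : Type*} [CommRing R] [Ring A]
    [Algebra R A] {a b : R} (hab : IsUnit (a - b)) {X Y M : A}
    (hX : IsNilpotent (X - algebraMap R A a)) (hY : IsNilpotent (Y - algebraMap R A b))
    (h : M * X = Y * M) : M = 0 := by
  set T : A →ₗ[R] A := LinearMap.mulRight R X - LinearMap.mulLeft R Y
  have hT : T = algebraMap R _ (a - b) + (LinearMap.mulRight R (X - algebraMap R A a) -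
      LinearMap.mulLeft R (Y - algebraMap R A b)) := by
    ext Z
    simp [T, Algebra.smul_def, Algebra.commutes, mul_sub, sub_mul]
    abel
  have hnil : IsNilpotent (LinearMap.mulRight R (X - algebraMap R A a) -
      LinearMap.mulLeft R (Y - algebraMap R A b)) :=
    (LinearMap.commute_mulLeft_right _ _).symm.isNilpotent_sub
      ((LinearMap.isNilpotent_mulRight_iff R _).mpr hX)
      ((LinearMap.isNilpotent_mulLeft_iff R _).mpr hY)
  have hunit : IsUnit T := hT ▸ hnil.isUnit_add_left_of_commute (hab.map _)
    (Algebra.commutes _ _).symm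
  refine (Module.End.isUnit_iff T).mp hunit |>.injective ?_
  simp [T, h]

theorem Matrix.IsUpperTriangular.isNilpotent_sub_algebraMap {R : Type*} [CommRing R]
    {ι : Type*} [Fintype ι] [DecidableEq ι] [LinearOrder ι] {M : Matrix ι ι R} (a : R)
    (hM : M.IsUpperTriangular) (hdiag : ∀ i, M i i = a) :
    IsNilpotent (M - algebraMap R _ a) := by
  refine ⟨Fintype.card ι, ?_⟩
  have := M.aeval_self_charpoly
  rw [M.charpoly_of_isUpperTriangular hM] at this
  simpa [hdiag] using this

namespace GBTA

variable {R : Type} [CommRing R] {e : ℕ}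

theorem jordan_isUpperTriangular (n : ℕ) (lam : R) : (jordan R n lam).IsUpperTriangular := by
  intro i j hji
  replace hji : j < i := hji
  have : (j : ℕ) ≠ i + 1 := by omega
  simp [jordan, hji.ne', this]

theorem isNilpotent_mulVecLin_jordan_sub (n : ℕ) (lam : R) :
    IsNilpotent ((jordan R n lam).mulVecLin - algebraMap R _ lam) := by
  have h := Matrix.IsUpperTriangular.isNilpotent_sub_algebraMap lam
    (jordan_isUpperTriangular n lam) (fun i => by simp [jordan])
  have h' := h.map (Matrix.toLinAlgEquiv' (R := R) (n := Fin n))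
  rwa [map_sub, AlgEquiv.commutes] at h'

section Mk1

variable {m : ℕ} {W : Type} [AddCommGroup W] [Module R W]

theorem mk1_apply (s d : Fin m) (g : W →ₗ[R] W) (x : Fin m → W) :
    mk1 s d g x = Pi.single d (g (x s)) := by
  funext r
  by_cases h : r = d <;> simp [mk1, h]

theorem mk1_comp_mk1_of_ne {s d s' d' : Fin m} (h : d' ≠ s) (g g' : W →ₗ[R] W) :
    mk1 s d g ∘ₗ mk1 s' d' g' = 0 := by
  refine LinearMap.ext fun x => ?_
  simp [mk1_apply, Pi.single_eq_of_ne' h]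

theorem mk1_comp_prj (S : Fin m → Prop) [DecidablePred S] (s d : Fin m) (g : W →ₗ[R] W) :
    mk1 s d g ∘ₗ prj S = if S s then mk1 s d g else 0 := by
  refine LinearMap.ext fun x => ?_
  split_ifs with hs <;> simp [mk1_apply, prj, hs]

theorem prj_comp_mk1 (S : Fin m → Prop) [DecidablePred S] (s d : Fin m) (g : W →ₗ[R] W) :
    prj S ∘ₗ mk1 s d g = if S d then mk1 s d g else 0 := by
  refine LinearMap.ext fun x => funext fun r => ?_
  by_cases hr : r = d
  · subst hr; split_ifs with hd <;> simp [mk1_apply, prj, hd]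
  · split_ifs <;> simp [mk1_apply, prj, hr]

theorem prj_apply (S : Fin m → Prop) [DecidablePred S] (x : Fin m → W) (r : Fin m) :
    prj (R := R) S x r = if S r then x r else 0 := rfl

theorem prj_single (S : Fin m → Prop) [DecidablePred S] {s : Fin m} (hs : S s) (y : W) :
    prj (R := R) S (Pi.single s y) = Pi.single s y := by
  funext r
  by_cases hr : r = s
  · subst hr; simp [prj, hs]
  · simp [prj, hr]

def mk1Lin (s d : Fin m) : (W →ₗ[R] W) →ₗ[R] ((Fin m → W) →ₗ[R] (Fin m → W)) where
  toFun := mk1 s d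
  map_add' g g' := LinearMap.ext fun x => by simp [mk1_apply, Pi.single_add]
  map_smul' c g := LinearMap.ext fun x => by simp [mk1_apply, Pi.single_smul]

theorem mk1Lin_injective (s d : Fin m) : Function.Injective (mk1Lin (R := R) (W := W) s d) := by
  intro g g' h
  ext y : 1
  simpa [mk1Lin, mk1_apply] using congr_fun (LinearMap.congr_fun h (Pi.single s y)) d

def block (f : (Fin m → W) →ₗ[R] (Fin m → W)) (r s : Fin m) : W →ₗ[R] W :=
  LinearMap.proj r ∘ₗ f ∘ₗ LinearMap.single R (fun _ => W) s

theorem block_apply (f : (Fin m → W) →ₗ[R] (Fin m → W)) (r s : Fin m) (y : W) :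
    block f r s y = f (Pi.single s y) r := rfl

variable {f : (Fin m → W) →ₗ[R] (Fin m → W)}

theorem apply_single_of_comp_mk1 {s d : Fin m} {g g' : W →ₗ[R] W}
    (h : f ∘ₗ mk1 s d g = mk1 s d g' ∘ₗ f) (y : W) :
    f (Pi.single d (g y)) = Pi.single d (g' (block f s s y)) := by
  simpa [mk1_apply, block_apply] using LinearMap.congr_fun h (Pi.single s y)

theorem apply_single_apply_eq_zero_of_comp_prj {S : Fin m → Prop} [DecidablePred S]
    (h : f ∘ₗ prj S = prj S ∘ₗ f) {r s : Fin m} (hs : S s) (hr : ¬ S r) (y : W) :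
    f (Pi.single s y) r = 0 := by
  have := congr_fun (LinearMap.congr_fun h (Pi.single s y)) r
  rwa [LinearMap.comp_apply, prj_single S hs, LinearMap.comp_apply, prj_apply, if_neg hr] at this

end Mk1

section Band

variable [NeZero e]

theorem sndRow_ne_lastRow : sndRow e ≠ lastRow e := by
  have := NeZero.pos e
  simp only [sndRow, lastRow, ne_eq, Fin.ext_iff]
  omega

theorem vrt_eq_ve_iff {r : Fin (e + 1)} : vrt e r = ve e ↔ r = sndRow e ∨ r = lastRow e := by
  have := r.isLt
  simp only [vrt, ve, sndRow, lastRow, Fin.ext_iff]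
  split_ifs <;> simp <;> omega

theorem vrt_sndRow : vrt e (sndRow e) = ve e := vrt_eq_ve_iff.mpr (.inl rfl)

theorem vrt_lastRow : vrt e (lastRow e) = ve e := vrt_eq_ve_iff.mpr (.inr rfl)

variable (n : ℕ) (lam mu : R)

theorem band_a_ve : (band R e n lam).a (ve e) = mk1 (sndRow e) ⟨0, by omega⟩ LinearMap.id :=
  if_pos rfl

theorem band_a_vem (he : 2 ≤ e) :
    (band R e n lam).a (vem e) = mk1 ⟨e - 2, by omega⟩ (lastRow e) LinearMap.id := by
  simp [band, vem, show e - 2 ≠ e - 1 by omega]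

theorem band_a_of_lt {j : Fin e} (hj : j.val < e - 2) :
    (band R e n lam).a j = mk1 ⟨j, by omega⟩ ⟨j + 1, by omega⟩ LinearMap.id := by
  simp [band, show j.val ≠ e - 1 by omega, show j.val ≠ e - 2 by omega]

theorem band_a_eq_mk1 (he : 2 ≤ e) (j : Fin e) : ∃ s t : Fin (e + 1),
    s ≠ lastRow e ∧ t ≠ sndRow e ∧ (band R e n lam).a j = mk1 s t LinearMap.id := by
  rcases lt_trichotomy j.val (e - 2) with hj | hj | hj
  · exact ⟨_, _, by simp [lastRow, Fin.ext_iff]; omega, by simp [sndRow, Fin.ext_iff]; omega,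
      band_a_of_lt n lam hj⟩
  · obtain rfl : j = vem e := Fin.ext hj
    exact ⟨_, _, by simp [lastRow, Fin.ext_iff]; omega, sndRow_ne_lastRow.symm,
      band_a_vem n lam he⟩
  · obtain rfl : j = ve e := Fin.ext (by simp [ve]; omega)
    exact ⟨_, _, sndRow_ne_lastRow, by simp [sndRow, Fin.ext_iff]; omega, band_a_ve n lam⟩

theorem mk1_mem_homSet_band (he : 2 ≤ e) (g : (Fin n → R) →ₗ[R] (Fin n → R)) :
    mk1 (sndRow e) (lastRow e) g ∈ homSet (band R e n lam) (band R e n mu) := by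
  refine ⟨fun i => ?_, fun j => ?_, ?_⟩
  · show mk1 _ _ g ∘ₗ prj _ = prj _ ∘ₗ mk1 _ _ g
    rw [mk1_comp_prj, prj_comp_mk1, vrt_sndRow, vrt_lastRow]
  · obtain ⟨s, t, hs, ht, ha⟩ := band_a_eq_mk1 n lam he j
    rw [ha, mk1_comp_mk1_of_ne ht, mk1_comp_mk1_of_ne hs.symm]
  · show mk1 _ _ g ∘ₗ mk1 _ _ _ = mk1 _ _ _ ∘ₗ mk1 _ _ g
    rw [mk1_comp_mk1_of_ne sndRow_ne_lastRow.symm, mk1_comp_mk1_of_ne sndRow_ne_lastRow.symm]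

variable {n lam mu} {f : (Fin (e + 1) → Fin n → R) →ₗ[R] (Fin (e + 1) → Fin n → R)}
  (hf : f ∈ homSet (band R e n lam) (band R e n mu))
include hf

theorem band_hom_apply_single_of_lt {j : ℕ} (hj : j < e - 1) (y : Fin n → R) :
    f (Pi.single ⟨j, by omega⟩ y) =
      Pi.single ⟨j, by omega⟩ (block f (sndRow e) (sndRow e) y) := by
  induction j with
  | zero =>
    have h := hf.2.1 (ve e)
    rw [band_a_ve] at h
    simpa using apply_single_of_comp_mk1 h y
  | succ j ih =>
    have h := hf.2.1 ⟨j, by omega⟩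
    rw [band_a_of_lt n lam (by simp; omega)] at h
    simpa [block_apply, ih (by omega)] using apply_single_of_comp_mk1 h y

theorem band_hom_apply_single_lastRow (he : 2 ≤ e) (y : Fin n → R) :
    f (Pi.single (lastRow e) y) = Pi.single (lastRow e) (block f (sndRow e) (sndRow e) y) := by
  have h := hf.2.1 (vem e)
  rw [band_a_vem n lam he] at h
  simpa [block_apply, band_hom_apply_single_of_lt hf (j := e - 2) (by omega)]
    using apply_single_of_comp_mk1 h y

theorem band_hom_block_comp_jordan (he : 2 ≤ e) :
    block f (sndRow e) (sndRow e) ∘ₗ (jordan R n lam).mulVecLin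
      = (jordan R n mu).mulVecLin ∘ₗ block f (sndRow e) (sndRow e) := by
  refine LinearMap.ext fun y => ?_
  have h := apply_single_of_comp_mk1 hf.2.2 y
  rw [band_hom_apply_single_lastRow hf he] at h
  simpa using congr_fun h (lastRow e)

theorem band_hom_block_sndRow_eq_zero (he : 2 ≤ e) (hlm : IsUnit (lam - mu)) :
    block f (sndRow e) (sndRow e) = 0 :=
  eq_zero_of_mul_eq_mul_of_isNilpotent_sub hlm (isNilpotent_mulVecLin_jordan_sub n lam)
    (isNilpotent_mulVecLin_jordan_sub n mu) (band_hom_block_comp_jordan hf he)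

theorem band_hom_eq_mk1 (he : 2 ≤ e) (hlm : IsUnit (lam - mu)) :
    f = mk1 (sndRow e) (lastRow e) (block f (lastRow e) (sndRow e)) := by
  have hX := band_hom_block_sndRow_eq_zero hf he hlm
  refine LinearMap.pi_ext fun r y => ?_
  rw [mk1_apply]
  by_cases hr : r = sndRow e
  · subst hr
    funext t
    rw [Pi.single_eq_same]
    by_cases ht : vrt e t = ve e
    · rcases vrt_eq_ve_iff.mp ht with rfl | rfl
      · rw [Pi.single_eq_of_ne sndRow_ne_lastRow, ← block_apply, hX, LinearMap.zero_apply]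
      · rw [Pi.single_eq_same, block_apply]
    · rw [Pi.single_eq_of_ne (fun h : t = lastRow e => ht (h ▸ vrt_lastRow))]
      exact apply_single_apply_eq_zero_of_comp_prj (hf.1 (ve e)) vrt_sndRow ht y
  · rw [Pi.single_eq_of_ne' hr, map_zero, Pi.single_zero]
    rcases lt_or_ge r.val (e - 1) with hlt | hge
    · simpa [hX] using band_hom_apply_single_of_lt hf hlt y
    · obtain rfl : r = lastRow e := by
        have := r.isLt
        simp only [sndRow, lastRow, Fin.ext_iff] at hr ⊢
        omega
      simpa [hX] using band_hom_apply_single_lastRow hf he y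

end Band

theorem homSet_band_eq_range [NeZero e] (he : 2 ≤ e) {n : ℕ} {lam mu : R}
    (hlm : IsUnit (lam - mu)) :
    homSet (band R e n lam) (band R e n mu) = LinearMap.range (mk1Lin (sndRow e) (lastRow e)) := by
  ext f
  constructor
  · intro hf
    exact ⟨_, (band_hom_eq_mk1 hf he hlm).symm⟩
  · rintro ⟨g, rfl⟩
    exact mk1_mem_homSet_band n lam mu he g

theorem band_hom_dim_general (k : Type) [Field k] (e : ℕ) (he : 2 ≤ e) [NeZero e]
    (n : ℕ) (lam mu : k) (hne : lam ≠ mu) :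
    Module.finrank k (homSet (band k e n lam) (band k e n mu)) = n ^ 2 := by
  rw [homSet_band_eq_range he (sub_ne_zero.mpr hne).isUnit,
    LinearMap.finrank_range_of_inj (mk1Lin_injective _ _), Module.finrank_linearMap,
    Module.finrank_fin_fun, sq]

/-- For every `n ≥ 1` and nonzero `λ ≠ μ`, the space of
`Λ_e`-module homomorphisms `B(n, λ) → B(n, μ)` has `k`-dimension `n²`. -/
theorem band_hom_dim (k : Type) [Field k] (e : ℕ) (he : 2 ≤ e) [NeZero e]
    (n : ℕ) (hn : 1 ≤ n) (lam mu : k) (hlam : lam ≠ 0) (hmu : mu ≠ 0)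
    (hne : lam ≠ mu) :
    Module.finrank k (homSet (band k e n lam) (band k e n mu)) = n ^ 2 :=
  band_hom_dim_general k e he n lam mu hne

end GBTA
end

section
/- Let M be the free rank-one k[t]/(t²)-module M = (k[t]/(t²))·m with v_e·m = m (so M is concentrated at vertex e), α_i acting as zero for all 1 ≤ i ≤ e and δ(m) = t·m. Then: (i) this action satisfies the defining relations of Λ_e, making M a (k[t]/(t²)) ⊗_k Λ_e-module, free over k[t]/(t²), with M/tM isomorphic to the simple module S_e; (ii) there is no (k[t]/(t³)) ⊗_k Λ_e-module M′ that is free of rank one as a k[t]/(t³)-module and satisfies M′/t²M′ ≅ M as (k[t]/(t²)) ⊗_k Λ_e-modules. -/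
set_option synthInstance.maxHeartbeats 1000000
set_option maxHeartbeats 1000000

/-! Common framework: representations of the quiver Q_e / modules over the
generalized Brauer star algebra Λ_e, encoded as a module `V` together with
endomorphisms `v i` (images of the vertex idempotents), `a i` (images of the
arrows; `a i` is the arrow leaving vertex `i`, with `a ⟨e-1⟩` the arrow
`α_e : e → 1`) and `d` (image of the loop `δ`). -/

namespace GBTA

variable {R : Type} [CommRing R] {e : ℕ}

/-- `k[t]/(t²)`. -/
noncomputable abbrev Rtwo (k : Type) [Field k] : Type :=
  Polynomial k ⧸ Ideal.span {(Polynomial.X : Polynomial k) ^ 2}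

/-- The class of `t` in `k[t]/(t²)`. -/
noncomputable def th2 (k : Type) [Field k] : Rtwo k :=
  Ideal.Quotient.mk _ Polynomial.X

/-- `k[t]/(t³)`. -/
noncomputable abbrev Rthree (k : Type) [Field k] : Type :=
  Polynomial k ⧸ Ideal.span {(Polynomial.X : Polynomial k) ^ 3}

/-- The class of `t` in `k[t]/(t³)`. -/
noncomputable def th3 (k : Type) [Field k] : Rthree k :=
  Ideal.Quotient.mk _ Polynomial.X

/-- The rank-one free `k[t]/(t²)`-module concentrated at vertex `e`, with all
`α_i` acting as zero and `δ` acting as multiplication by `t`. -/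
@[reducible] noncomputable def M16 (k : Type) [Field k] (e : ℕ) [NeZero e] :
    PreRep (Rtwo k) e where
  V := Rtwo k
  v i := if i = ve e then 1 else 0
  a _ := 0
  d := th2 k • 1


/-! Every endomorphism of a module free of rank one over a commutative ring is a scalar, so
on a rank-one lift `M'` the idempotents and arrows commute. Then `α_i = v_{i+1} α_i v_i` forces
every arrow to vanish (as `e ≥ 2`, the vertices `i` and `i + 1` differ), the relation
`δ² = C_e²` becomes `δ² = 0`, and `δ` is multiplication by some `u ∈ k[t]/(t³)` with `u² = 0`,
i.e. `u ∈ (t²)`. Hence `δ` maps `M'` into `t²M'`, so it acts as zero on `M'/t²M'`, whereas it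
acts on `M` as the nonzero multiplication by `t`. -/

end GBTA

section Cyclic

variable {R V : Type} [CommRing R] [AddCommGroup V] [Module R V] {b : V}

theorem Module.End.exists_eq_smul_one_of_forall_eq_smul (hb : ∀ x : V, ∃ c : R, x = c • b)
    (f : Module.End R V) : ∃ c : R, f = c • 1 := by
  obtain ⟨c, hc⟩ := hb (f b)
  refine ⟨c, LinearMap.ext fun x => ?_⟩
  obtain ⟨d, rfl⟩ := hb x
  rw [map_smul, hc, LinearMap.smul_apply, Module.End.one_apply, smul_comm]

theorem Module.End.commute_of_forall_eq_smul (hb : ∀ x : V, ∃ c : R, x = c • b)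
    (f g : Module.End R V) : Commute f g := by
  obtain ⟨c, rfl⟩ := exists_eq_smul_one_of_forall_eq_smul hb f
  obtain ⟨d, rfl⟩ := exists_eq_smul_one_of_forall_eq_smul hb g
  exact ((Commute.one_left 1).smul_left c).smul_right d

theorem smul_left_injective_of_forall_existsUnique (hb : ∀ x : V, ∃! c : R, x = c • b) :
    Function.Injective (· • b : R → V) :=
  fun _ _ h => (hb _).unique rfl h

end Cyclic

theorem Prime.sq_dvd_of_pow_three_dvd_mul_self {M : Type} [CommMonoidWithZero M]
    [IsCancelMulZero M] {p a : M} (hp : Prime p) (h : p ^ 3 ∣ a * a) : p ^ 2 ∣ a := by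
  obtain ⟨q, rfl⟩ : p ∣ a :=
    hp.dvd_of_dvd_pow (n := 2) (by rw [sq]; exact (dvd_pow_self p three_ne_zero).trans h)
  have hq : p ∣ q * q := by
    rw [pow_succ, show p * q * (p * q) = p ^ 2 * (q * q) by rw [sq, mul_mul_mul_comm]] at h
    exact (mul_dvd_mul_iff_left (pow_ne_zero 2 hp.ne_zero)).mp h
  rw [sq]
  exact mul_dvd_mul_left p (or_self_iff.mp (hp.dvd_or_dvd hq))

namespace GBTA

open Polynomial

variable {R : Type} [CommRing R] {e : ℕ} [NeZero e]

theorem cyc_eq_zero {ρ : PreRep R e} (h : ∀ i, ρ.a i = 0) (i : Fin e) : cyc ρ i = 0 := by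
  simp [cyc, h, NeZero.ne e]

theorem add_one_ne_self (he : 2 ≤ e) (i : Fin e) : i + 1 ≠ i := by
  obtain ⟨n, rfl⟩ : ∃ n, e = n + 2 := ⟨e - 2, by omega⟩
  simp

theorem Satisfies.arrow_eq_zero {ρ : PreRep R e} (hρ : Satisfies ρ) (he : 2 ≤ e)
    (hcomm : ∀ f g : Module.End R ρ.V, Commute f g) (i : Fin e) : ρ.a i = 0 := by
  obtain ⟨horth, -, -, harrow, -⟩ := hρ
  calc ρ.a i = ρ.v (i + 1) * ρ.a i * ρ.v i := harrow i
    _ = ρ.a i * (ρ.v (i + 1) * ρ.v i) := by rw [(hcomm (ρ.v (i + 1)) (ρ.a i)).eq, mul_assoc]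
    _ = 0 := by rw [horth _ _ (add_one_ne_self he i), mul_zero]

theorem Satisfies.loop_mul_self_eq_zero {ρ : PreRep R e} (hρ : Satisfies ρ)
    (h : ∀ i, ρ.a i = 0) : ρ.d * ρ.d = 0 := by
  obtain ⟨-, -, -, -, -, -, -, hloop, -⟩ := hρ
  rw [hloop, cyc_eq_zero h, mul_zero]

variable (R e) in
@[reducible] def loopRep (t : R) : PreRep R e where
  V := R
  v i := if i = ve e then 1 else 0
  a _ := 0
  d := t • 1

theorem satisfies_loopRep {t : R} (ht : t * t = 0) : Satisfies (loopRep R e t) := by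
  refine ⟨fun i j hij => ?_, fun i => ?_, by simp, fun i => by simp, by simp, by simp, by simp,
    ?_, fun i _ => by simp⟩
  · dsimp only
    split_ifs with hi hj <;> simp_all
  · dsimp only
    split_ifs <;> simp
  · rw [cyc_eq_zero (fun _ => rfl), mul_zero, smul_mul_smul_comm, ht, zero_smul]

theorem Satisfies.exists_loop_eq_smul_one {ρ : PreRep R e} (hρ : Satisfies ρ) (he : 2 ≤ e)
    {b : ρ.V} (hb : ∀ x, ∃! c : R, x = c • b) : ∃ u : R, u * u = 0 ∧ ρ.d = u • 1 := by
  have hgen : ∀ x, ∃ c : R, x = c • b := fun x => (hb x).exists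
  have hd := hρ.loop_mul_self_eq_zero
    (hρ.arrow_eq_zero he (Module.End.commute_of_forall_eq_smul hgen))
  obtain ⟨u, hu⟩ := Module.End.exists_eq_smul_one_of_forall_eq_smul hgen ρ.d
  refine ⟨u, smul_left_injective_of_forall_existsUnique hb ?_, hu⟩
  simpa [hu, mul_smul] using LinearMap.congr_fun hd b

theorem th2_ne_zero (k : Type) [Field k] : th2 k ≠ 0 := by
  rw [th2, Ne, Ideal.Quotient.eq_zero_iff_mem, Ideal.mem_span_singleton]
  intro h
  simpa using natDegree_le_of_dvd h X_ne_zero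

theorem th2_mul_self (k : Type) [Field k] : th2 k * th2 k = 0 := by
  rw [th2, ← map_mul, Ideal.Quotient.eq_zero_iff_mem, ← sq]
  exact Ideal.mem_span_singleton_self _

theorem exists_eq_th3_mul_th3_mul_of_mul_self_eq_zero {k : Type} [Field k] {u : Rthree k}
    (hu : u * u = 0) : ∃ w, u = th3 k * th3 k * w := by
  obtain ⟨p, rfl⟩ := Ideal.Quotient.mk_surjective u
  rw [← map_mul, Ideal.Quotient.eq_zero_iff_mem, Ideal.mem_span_singleton] at hu
  obtain ⟨q, rfl⟩ := prime_X.sq_dvd_of_pow_three_dvd_mul_self hu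
  exact ⟨Ideal.Quotient.mk _ q, by rw [th3, ← map_mul, ← map_mul, sq]⟩

variable (k : Type) [Field k]

noncomputable def residue : Rtwo k →+* k :=
  Ideal.Quotient.lift _ constantCoeff fun p hp => by
    obtain ⟨q, rfl⟩ := Ideal.mem_span_singleton.mp hp
    simp

theorem residue_algebraMap (c : k) : residue k (algebraMap k (Rtwo k) c) = c :=
  coeff_C_zero

theorem residue_th2 : residue k (th2 k) = 0 :=
  coeff_X_zero

theorem residue_eq_zero_iff {x : Rtwo k} : residue k x = 0 ↔ ∃ y, x = th2 k * y := by
  obtain ⟨p, rfl⟩ := Ideal.Quotient.mk_surjective x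
  refine ⟨fun h => ?_, ?_⟩
  · obtain ⟨q, rfl⟩ := X_dvd_iff.mpr h
    exact ⟨Ideal.Quotient.mk _ q, map_mul _ _ _⟩
  · rintro ⟨y, hy⟩
    rw [hy, map_mul, residue_th2, zero_mul]

/-- The rank-one free `k[t]/(t²)`-module `M` concentrated at
vertex `e` with `α_i = 0` and `δ = t` satisfies the relations of `Λ_e` and
reduces mod `t` to the simple module `S_e`; and there is no `k[t]/(t³) ⊗ Λ_e`-module
`M'`, free of rank one over `k[t]/(t³)`, with `M'/t²M' ≅ M`. -/
theorem no_lift_of_Se (k : Type) [Field k] (e : ℕ) (he : 2 ≤ e) [NeZero e] :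
    (Satisfies (M16 k e) ∧ Module.Free (Rtwo k) (M16 k e).V ∧
      ∃ π : (M16 k e).V →+ k, Function.Surjective π ∧
        (∀ x, π x = 0 ↔ ∃ y, x = th2 k * y) ∧
        (∀ (c : k) (x : (M16 k e).V), π (algebraMap k (Rtwo k) c * x) = c * π x) ∧
        (∀ i x, π ((M16 k e).v i x) = (Se k e).v i (π x)) ∧
        (∀ i x, π ((M16 k e).a i x) = 0) ∧
        (∀ x, π ((M16 k e).d x) = 0)) ∧
    ¬ ∃ M' : PreRep (Rthree k) e, Satisfies M' ∧
        (∃ b : M'.V, ∀ x : M'.V, ∃! c : Rthree k, x = c • b) ∧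
        ∃ π : M'.V →+ (M16 k e).V, Function.Surjective π ∧
          (∀ x, π x = 0 ↔ ∃ y, x = (th3 k * th3 k) • y) ∧
          (∀ (c : k) x, π (algebraMap k (Rthree k) c • x) = algebraMap k (Rtwo k) c • π x) ∧
          (∀ x, π (th3 k • x) = th2 k • π x) ∧
          (∀ i x, π (M'.v i x) = (M16 k e).v i (π x)) ∧
          (∀ i x, π (M'.a i x) = (M16 k e).a i (π x)) ∧
          (∀ x, π (M'.d x) = (M16 k e).d (π x)) := by
  refine ⟨⟨satisfies_loopRep (th2_mul_self k), inferInstance, (residue k).toAddMonoidHom,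
    fun c => ⟨algebraMap k (Rtwo k) c, residue_algebraMap k c⟩, fun x => residue_eq_zero_iff k,
    fun c x => by simp [residue_algebraMap], fun i x => ?_, fun i x => map_zero _,
    fun x => by simp [residue_th2]⟩, ?_⟩
  · dsimp only
    split_ifs <;> simp
  rintro ⟨M', hM', ⟨b, hb⟩, π, hπ_surj, hπ_ker, -, -, -, -, hπ_loop⟩
  obtain ⟨u, hu, hloop⟩ := hM'.exists_loop_eq_smul_one he hb
  obtain ⟨w, rfl⟩ := exists_eq_th3_mul_th3_mul_of_mul_self_eq_zero hu
  have h_th2_mul : ∀ x, th2 k * π x = 0 := fun x => by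
    have hdx : M'.d x = (th3 k * th3 k) • w • x := by
      rw [hloop, LinearMap.smul_apply, Module.End.one_apply, mul_smul]
    simpa [hdx, (hπ_ker _).mpr ⟨w • x, rfl⟩] using (hπ_loop x).symm
  obtain ⟨x, hx⟩ := hπ_surj 1
  exact th2_ne_zero k (by simpa [hx] using h_th2_mul x)

end GBTA
end
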